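/- arXiv:cond-mat/0209157 — 8 statements merged into one kernel-verified Lean document; each statement's English description precedes it below -/
import Mathlib

section
/- Let J be a real symmetric N×N matrix with constant row sums j := ∑_ν J_{μν} (independent of μ), and let j_min be the smallest eigenvalue of J. Suppose s is a state with ∑_μ s_μ = 0 satisfying ∑_ν J_{μν} s_ν = j_min s_μ for all μ, and let n be a unit vector with ⟨n, s_μ⟩ = 0 for all μ. Then for every 0 ≤ S ≤ N the state ŝ_μ(S) := √(1 − S²/N²)·s_μ + (S/N)·n is a relative ground state: its energy is H₀(ŝ(S)) = ((j − j_min)/N)·S² + j_min·N, and every state t with ‖∑_μ t_μ‖ = S satisfies H₀(t) ≥ ((j − j_min)/N)·S² + j_min·N. -/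
/-!
In each coordinate `a` the energy is the quadratic form `vᵀ J v` of `v = (t μ a)_μ`. As `J` is
symmetric with `J 1 = j 1`, splitting off the mean of `v` gives
`vᵀ J v = wᵀ J w + j (∑ v)² / N` and `‖v‖² = ‖w‖² + (∑ v)² / N`, while `wᵀ J w ≥ j_min ‖w‖²`
because `J - j_min` is positive semidefinite. Summing over coordinates,
`H₀(t) ≥ j_min N + (j - j_min) ‖∑ t‖² / N`. The tilted state attains this: since `n ⊥ s_μ`,
`⟨ŝ_μ, ŝ_ν⟩ = (1 - S²/N²) ⟨s_μ, s_ν⟩ + S²/N²`, and the eigenvector equation gives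
`H₀(s) = j_min N`.
-/

open scoped RealInnerProductSpace

/-- The energy of a classical Heisenberg spin state. -/
noncomputable def heisenbergEnergy {N : ℕ} (J : Matrix (Fin N) (Fin N) ℝ)
    (s : Fin N → EuclideanSpace ℝ (Fin 3)) : ℝ :=
  ∑ μ, ∑ ν, J μ ν * ⟪s μ, s ν⟫

namespace Matrix

variable {n : Type*} [Fintype n] [DecidableEq n] {J : Matrix n n ℝ} {m : ℝ}

theorem IsSymm.posSemidef_sub_algebraMap (hJ : J.IsSymm)
    (hm : ∀ x, Module.End.HasEigenvalue (toLin' J) x → m ≤ x) :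
    (J - algebraMap ℝ _ m).PosSemidef := by
  refine posSemidef_iff_isHermitian_and_spectrum_nonneg.mpr ⟨?_, ?_⟩
  · rw [algebraMap_eq_diagonal]
    exact (isHermitian_iff_isSymm.mpr hJ).sub (isHermitian_diagonal _)
  · rw [← spectrum.sub_singleton_eq]
    rintro _ ⟨x, hx, _, rfl, rfl⟩
    rw [← spectrum_toLin', ← Module.End.hasEigenvalue_iff_mem_spectrum] at hx
    exact sub_nonneg.mpr (hm x hx)

theorem IsSymm.mul_dotProduct_self_le_dotProduct_mulVec (hJ : J.IsSymm)
    (hm : ∀ x, Module.End.HasEigenvalue (toLin' J) x → m ≤ x) (v : n → ℝ) :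
    m * (v ⬝ᵥ v) ≤ v ⬝ᵥ J *ᵥ v := by
  have := (hJ.posSemidef_sub_algebraMap hm).dotProduct_mulVec_nonneg v
  rw [Algebra.algebraMap_eq_smul_one, sub_mulVec, smul_mulVec, one_mulVec, star_trivial,
    dotProduct_sub, dotProduct_smul, smul_eq_mul] at this
  linarith

theorem IsSymm.le_dotProduct_mulVec_of_forall_sum_eq {j : ℝ} (hJ : J.IsSymm)
    (hrow : ∀ μ, ∑ ν, J μ ν = j)
    (hm : ∀ x, Module.End.HasEigenvalue (toLin' J) x → m ≤ x) (v : n → ℝ) :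
    m * (v ⬝ᵥ v) + (j - m) * (∑ μ, v μ) ^ 2 / Fintype.card n ≤ v ⬝ᵥ J *ᵥ v := by
  set C := ∑ μ, v μ
  set a := C / Fintype.card n
  have hJ1 : J *ᵥ 1 = j • 1 := by ext μ; simp [mulVec, dotProduct, hrow]
  have h1J : 1 ᵥ* J = j • 1 := by rw [← mulVec_transpose, hJ.eq, hJ1]
  have hw := hJ.mul_dotProduct_self_le_dotProduct_mulVec hm (v - a • 1)
  have hC : v ⬝ᵥ 1 = C := dotProduct_one v
  have hww : (v - a • 1) ⬝ᵥ (v - a • 1) = v ⬝ᵥ v - 2 * a * C + a ^ 2 * Fintype.card n := by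
    simp only [dotProduct_sub, sub_dotProduct, dotProduct_smul, smul_dotProduct, hC,
      dotProduct_comm 1 v, one_dotProduct_one, smul_eq_mul]
    ring
  have hJww : (v - a • 1) ⬝ᵥ J *ᵥ (v - a • 1)
      = v ⬝ᵥ J *ᵥ v - 2 * a * j * C + a ^ 2 * Fintype.card n * j := by
    simp only [mulVec_sub, mulVec_smul, hJ1, dotProduct_sub, sub_dotProduct, dotProduct_smul,
      smul_dotProduct, dotProduct_mulVec 1, h1J, hC, dotProduct_comm 1 v, one_dotProduct_one,
      smul_eq_mul]
    ring
  have haC : 2 * a * C - a ^ 2 * Fintype.card n = C ^ 2 / Fintype.card n := by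
    rcases eq_or_ne (Fintype.card n : ℝ) 0 with h | h
    · simp [a, h]
    · simp only [a]; field_simp; ring
  rw [hww, hJww] at hw
  rw [mul_div_assoc, ← haC]
  linarith

end Matrix

theorem norm_smul_add_smul_eq_one {E : Type*} [NormedAddCommGroup E] [InnerProductSpace ℝ E]
    {x y : E} {α β : ℝ} (hx : ‖x‖ = 1) (hy : ‖y‖ = 1) (hxy : ⟪x, y⟫ = 0)
    (hαβ : α ^ 2 + β ^ 2 = 1) : ‖α • x + β • y‖ = 1 := by
  have hsq : ‖α • x + β • y‖ ^ 2 = 1 := by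
    rw [norm_add_sq_real, real_inner_smul_left, real_inner_smul_right, hxy, norm_smul, norm_smul,
      hx, hy, Real.norm_eq_abs, Real.norm_eq_abs]
    simpa using hαβ
  exact (pow_eq_one_iff_of_nonneg (norm_nonneg _) two_ne_zero).mp hsq

section Energy

open Finset Matrix

variable {N : ℕ} (J : Matrix (Fin N) (Fin N) ℝ)

theorem heisenbergEnergy_eq_sum_dotProduct_mulVec (t : Fin N → EuclideanSpace ℝ (Fin 3)) :
    heisenbergEnergy J t = ∑ a, (fun μ => t μ a) ⬝ᵥ J *ᵥ fun μ => t μ a := by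
  simp only [heisenbergEnergy, dotProduct, mulVec, EuclideanSpace.inner_eq_star_dotProduct,
    star_trivial, mul_sum]
  refine (Finset.sum_congr rfl fun μ _ => Finset.sum_comm).trans (Finset.sum_comm.trans ?_)
  exact Finset.sum_congr rfl fun a _ => Finset.sum_congr rfl fun μ _ =>
    Finset.sum_congr rfl fun ν _ => by ring

theorem heisenbergEnergy_eq_of_forall_sum_smul_eq {m : ℝ} {s : Fin N → EuclideanSpace ℝ (Fin 3)}
    (heig : ∀ μ, ∑ ν, J μ ν • s ν = m • s μ) :
    heisenbergEnergy J s = m * ∑ μ, ‖s μ‖ ^ 2 := by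
  simp_rw [heisenbergEnergy, ← real_inner_smul_right, ← inner_sum, heig, real_inner_smul_right,
    real_inner_self_eq_norm_sq, mul_sum]

theorem heisenbergEnergy_smul_add_smul (α β : ℝ) {s : Fin N → EuclideanSpace ℝ (Fin 3)}
    {n : EuclideanSpace ℝ (Fin 3)} (hn : ‖n‖ = 1) (horth : ∀ μ, ⟪n, s μ⟫ = 0) :
    heisenbergEnergy J (fun μ => α • s μ + β • n)
      = α ^ 2 * heisenbergEnergy J s + β ^ 2 * ∑ μ, ∑ ν, J μ ν := by
  have hinner : ∀ μ ν, ⟪α • s μ + β • n, α • s ν + β • n⟫ = α ^ 2 * ⟪s μ, s ν⟫ + β ^ 2 := by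
    intro μ ν
    simp only [inner_add_left, inner_add_right, real_inner_smul_left, real_inner_smul_right,
      horth, real_inner_comm n, real_inner_self_eq_norm_sq, norm_smul, mul_pow, hn]
    simp [sq, mul_assoc]
  simp only [heisenbergEnergy, hinner, mul_add, sum_add_distrib, mul_sum]
  congr 1 <;> exact Finset.sum_congr rfl fun μ _ => Finset.sum_congr rfl fun ν _ => by ring

theorem le_heisenbergEnergy {j m : ℝ} (hJ : J.IsSymm) (hrow : ∀ μ, ∑ ν, J μ ν = j)
    (hm : ∀ x, Module.End.HasEigenvalue (toLin' J) x → m ≤ x)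
    (t : Fin N → EuclideanSpace ℝ (Fin 3)) :
    m * ∑ μ, ‖t μ‖ ^ 2 + (j - m) * ‖∑ μ, t μ‖ ^ 2 / N ≤ heisenbergEnergy J t := by
  have hspins : ∑ μ, ‖t μ‖ ^ 2 = ∑ a, (fun μ => t μ a) ⬝ᵥ fun μ => t μ a := by
    simp only [EuclideanSpace.norm_sq_eq, Real.norm_eq_abs, sq_abs]
    simp only [sq, dotProduct]
    exact Finset.sum_comm
  have htotal : ‖∑ μ, t μ‖ ^ 2 = ∑ a, (∑ μ, t μ a) ^ 2 := by
    simp [EuclideanSpace.norm_sq_eq]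
  calc m * ∑ μ, ‖t μ‖ ^ 2 + (j - m) * ‖∑ μ, t μ‖ ^ 2 / N
      = ∑ a, (m * ((fun μ => t μ a) ⬝ᵥ fun μ => t μ a)
          + (j - m) * (∑ μ, t μ a) ^ 2 / Fintype.card (Fin N)) := by
        rw [hspins, htotal, sum_add_distrib, mul_sum, mul_sum, sum_div, Fintype.card_fin]
    _ ≤ ∑ a, (fun μ => t μ a) ⬝ᵥ J *ᵥ fun μ => t μ a :=
        sum_le_sum fun a _ => hJ.le_dotProduct_mulVec_of_forall_sum_eq hrow hm _
    _ = heisenbergEnergy J t := (heisenbergEnergy_eq_sum_dotProduct_mulVec J t).symm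

end Energy

theorem tilted_states_are_relative_ground_states_general {N : ℕ}
    (J : Matrix (Fin N) (Fin N) ℝ) (hJ : J.IsSymm)
    (j : ℝ) (hrow : ∀ μ, ∑ ν, J μ ν = j)
    (jmin : ℝ)
    (hjmin_le : ∀ x : ℝ, Module.End.HasEigenvalue (Matrix.toLin' J) x → jmin ≤ x)
    (s : Fin N → EuclideanSpace ℝ (Fin 3)) (hstate : ∀ μ, ‖s μ‖ = 1)
    (heig : ∀ μ, ∑ ν, J μ ν • s ν = jmin • s μ)
    (n : EuclideanSpace ℝ (Fin 3)) (hn : ‖n‖ = 1)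
    (horth : ∀ μ, ⟪n, s μ⟫ = 0)
    (S : ℝ) (hS0 : 0 ≤ S) (hSN : S ≤ N) :
    (∀ μ, ‖Real.sqrt (1 - S ^ 2 / (N : ℝ) ^ 2) • s μ + (S / N) • n‖ = 1) ∧
      heisenbergEnergy J
          (fun μ => Real.sqrt (1 - S ^ 2 / (N : ℝ) ^ 2) • s μ + (S / N) • n) =
        (j - jmin) / N * S ^ 2 + jmin * N ∧
      ∀ t : Fin N → EuclideanSpace ℝ (Fin 3), (∀ μ, ‖t μ‖ = 1) →
        ‖∑ μ, t μ‖ = S →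
        (j - jmin) / N * S ^ 2 + jmin * N ≤ heisenbergEnergy J t := by
  have hα : Real.sqrt (1 - S ^ 2 / (N : ℝ) ^ 2) ^ 2 = 1 - S ^ 2 / (N : ℝ) ^ 2 :=
    Real.sq_sqrt (sub_nonneg.mpr (div_le_one_of_le₀ (pow_le_pow_left₀ hS0 hSN 2) (by positivity)))
  have hunit : ∀ u : Fin N → EuclideanSpace ℝ (Fin 3), (∀ μ, ‖u μ‖ = 1) →
      ∑ μ, ‖u μ‖ ^ 2 = N := fun u hu => by simp [hu]
  refine ⟨fun μ => ?_, ?_, fun t ht hS => ?_⟩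
  · refine norm_smul_add_smul_eq_one (hstate μ) hn ?_ (by rw [hα, div_pow]; ring)
    rw [real_inner_comm, horth]
  · rw [heisenbergEnergy_smul_add_smul J _ _ hn horth,
      heisenbergEnergy_eq_of_forall_sum_smul_eq J heig, hunit s hstate, hα]
    simp only [hrow, Finset.sum_const, Finset.card_univ, Fintype.card_fin, nsmul_eq_mul]
    rcases eq_or_ne (N : ℝ) 0 with hN | hN
    · simp [hN]
    · field_simp
      ring
  · have := le_heisenbergEnergy J hJ hrow hjmin_le t
    rwa [hunit t ht, hS, ← div_mul_eq_mul_div, add_comm] at this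

theorem tilted_states_are_relative_ground_states {N : ℕ}
    (J : Matrix (Fin N) (Fin N) ℝ) (hJ : J.IsSymm)
    (j : ℝ) (hrow : ∀ μ, ∑ ν, J μ ν = j)
    (jmin : ℝ)
    (hjmin : Module.End.HasEigenvalue (Matrix.toLin' J) jmin)
    (hjmin_le : ∀ x : ℝ, Module.End.HasEigenvalue (Matrix.toLin' J) x → jmin ≤ x)
    (s : Fin N → EuclideanSpace ℝ (Fin 3)) (hstate : ∀ μ, ‖s μ‖ = 1)
    (hsum : ∑ μ, s μ = 0)
    (heig : ∀ μ, ∑ ν, J μ ν • s ν = jmin • s μ)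
    (n : EuclideanSpace ℝ (Fin 3)) (hn : ‖n‖ = 1)
    (horth : ∀ μ, ⟪n, s μ⟫ = 0)
    (S : ℝ) (hS0 : 0 ≤ S) (hSN : S ≤ N) :
    (∀ μ, ‖Real.sqrt (1 - S ^ 2 / (N : ℝ) ^ 2) • s μ + (S / N) • n‖ = 1) ∧
      heisenbergEnergy J
          (fun μ => Real.sqrt (1 - S ^ 2 / (N : ℝ) ^ 2) • s μ + (S / N) • n) =
        (j - jmin) / N * S ^ 2 + jmin * N ∧
      ∀ t : Fin N → EuclideanSpace ℝ (Fin 3), (∀ μ, ‖t μ‖ = 1) →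
        ‖∑ μ, t μ‖ = S →
        (j - jmin) / N * S ^ 2 + jmin * N ≤ heisenbergEnergy J t :=
  tilted_states_are_relative_ground_states_general J hJ j hrow jmin hjmin_le s hstate heig n hn
    horth S hS0 hSN
end

section
/- Let J be a real symmetric N×N matrix with constant row sums j := ∑_ν J_{μν} (independent of μ), and let j_maxi be the largest eigenvalue of the quadratic form x ↦ ⟨x, Jx⟩ restricted to the hyperplane {x ∈ ℝ^N : ∑_μ x_μ = 0}. Suppose s is a state with ∑_μ s_μ = 0 satisfying ∑_ν J_{μν} s_ν = j_maxi s_μ for all μ, and let n be a unit vector with ⟨n, s_μ⟩ = 0 for all μ. Then for every 0 ≤ S ≤ N the state ŝ_μ(S) := √(1 − S²/N²)·s_μ + (S/N)·n is a relative anti-ground state: its energy is H₀(ŝ(S)) = ((j − j_maxi)/N)·S² + j_maxi·N, and every state t with ‖∑_μ t_μ‖ = S satisfies H₀(t) ≤ ((j − j_maxi)/N)·S² + j_maxi·N. -/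
/-!
Constant row sums make the all-ones vector an eigenvector of the symmetric matrix `J` with
eigenvalue `j`. Splitting each spin coordinate into its mean and a zero-sum remainder therefore
produces no cross terms, and the Rayleigh bound on the remainder bounds the energy of any state
with total spin of length `S` by `jmaxi (N - S²/N) + j S²/N`. The tilted state attains this
bound: its common component `(S/N) n` carries the energy `j S²/N` and its remainder, a scaled
eigenstate, the energy `jmaxi (N - S²/N)`.
-/

open scoped RealInnerProductSpace

namespace Matrix

variable {ι : Type*} [Fintype ι] {J : Matrix ι ι ℝ} {j : ℝ}

lemma sum_sum_mul_mul_eq_dotProduct_mulVec (x y : ι → ℝ) :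
    ∑ μ, ∑ ν, x μ * J μ ν * y ν = x ⬝ᵥ J *ᵥ y := by
  rw [dot_mulVec_eq_sum_sum, Finset.sum_comm]

lemma mulVec_one_eq_smul_of_row_sum (hrow : ∀ μ, ∑ ν, J μ ν = j) : J *ᵥ 1 = j • 1 := by
  ext μ
  simp [mulVec, dotProduct_one, hrow]

lemma one_vecMul_eq_smul_of_row_sum (hJ : J.IsSymm) (hrow : ∀ μ, ∑ ν, J μ ν = j) :
    1 ᵥ* J = j • 1 := by
  rw [← hJ.eq, vecMul_transpose, mulVec_one_eq_smul_of_row_sum hrow]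

lemma add_smul_one_dotProduct_mulVec (hJ : J.IsSymm) (hrow : ∀ μ, ∑ ν, J μ ν = j)
    {y : ι → ℝ} (hy : ∑ μ, y μ = 0) (c : ℝ) :
    (y + c • 1) ⬝ᵥ J *ᵥ (y + c • 1) = y ⬝ᵥ J *ᵥ y + c ^ 2 * j * Fintype.card ι := by
  have h1 : y ⬝ᵥ J *ᵥ 1 = 0 := by
    rw [mulVec_one_eq_smul_of_row_sum hrow, dotProduct_smul, dotProduct_one, hy, smul_zero]
  have h2 : 1 ⬝ᵥ J *ᵥ y = 0 := by
    rw [dotProduct_mulVec, one_vecMul_eq_smul_of_row_sum hJ hrow, smul_dotProduct,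
      one_dotProduct, hy, smul_zero]
  have h3 : (1 : ι → ℝ) ⬝ᵥ J *ᵥ 1 = j * Fintype.card ι := by
    rw [mulVec_one_eq_smul_of_row_sum hrow, dotProduct_smul, one_dotProduct_one, smul_eq_mul]
  simp only [mulVec_add, mulVec_smul, dotProduct_add, add_dotProduct, dotProduct_smul,
    smul_dotProduct, smul_eq_mul, h1, h2, h3]
  ring

lemma add_smul_one_dotProduct_self {y : ι → ℝ} (hy : ∑ μ, y μ = 0) (c : ℝ) :
    (y + c • 1) ⬝ᵥ (y + c • 1) = y ⬝ᵥ y + c ^ 2 * Fintype.card ι := by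
  simp only [add_dotProduct, dotProduct_add, dotProduct_smul, smul_dotProduct, smul_eq_mul]
  rw [one_dotProduct_one, dotProduct_one, one_dotProduct, hy]
  ring

theorem dotProduct_mulVec_le_of_le_on_sum_eq_zero (hJ : J.IsSymm)
    (hrow : ∀ μ, ∑ ν, J μ ν = j) {l : ℝ}
    (hl : ∀ y : ι → ℝ, ∑ μ, y μ = 0 → y ⬝ᵥ J *ᵥ y ≤ l * (y ⬝ᵥ y)) (x : ι → ℝ) :
    x ⬝ᵥ J *ᵥ x ≤ l * (x ⬝ᵥ x) + (j - l) / Fintype.card ι * (∑ μ, x μ) ^ 2 := by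
  rcases isEmpty_or_nonempty ι with _ | _
  · simp
  set N : ℝ := (Fintype.card ι : ℝ)
  have hN : N ≠ 0 := by positivity
  set c := (∑ μ, x μ) / N
  set y := x - c • 1
  have hy : ∑ μ, y μ = 0 := by
    simp only [y, c, Pi.sub_apply, Pi.smul_apply, Pi.one_apply, smul_eq_mul, mul_one,
      Finset.sum_sub_distrib, Finset.sum_const, Finset.card_univ, nsmul_eq_mul]
    field_simp
    ring
  have hx : x = y + c • 1 := by simp [y]
  have hxJx : x ⬝ᵥ J *ᵥ x = y ⬝ᵥ J *ᵥ y + c ^ 2 * j * N := by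
    rw [hx, add_smul_one_dotProduct_mulVec hJ hrow hy]
  have hxx : x ⬝ᵥ x = y ⬝ᵥ y + c ^ 2 * N := by
    rw [hx, add_smul_one_dotProduct_self hy]
  have hc : (j - l) / N * (∑ μ, x μ) ^ 2 = (j - l) * (c ^ 2 * N) := by
    simp only [c]
    field_simp
  rw [hxJx, hxx, hc]
  linarith [hl y hy]

end Matrix

open Matrix

section InnerProductSpace

variable {ι E : Type*} [Fintype ι] [NormedAddCommGroup E] [InnerProductSpace ℝ E]

theorem sum_sum_mul_inner_le_of_dotProduct_mulVec_le [FiniteDimensional ℝ E]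
    {J : Matrix ι ι ℝ} {α β : ℝ}
    (h : ∀ x : ι → ℝ, x ⬝ᵥ J *ᵥ x ≤ α * (x ⬝ᵥ x) + β * (∑ μ, x μ) ^ 2) (t : ι → E) :
    ∑ μ, ∑ ν, J μ ν * ⟪t μ, t ν⟫ ≤ α * ∑ μ, ‖t μ‖ ^ 2 + β * ‖∑ μ, t μ‖ ^ 2 := by
  let b := stdOrthonormalBasis ℝ E
  let x : Fin (Module.finrank ℝ E) → ι → ℝ := fun i μ => ⟪b i, t μ⟫
  have hinner (u v : E) : ⟪u, v⟫ = ∑ i, ⟪b i, u⟫ * ⟪b i, v⟫ := by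
    simp_rw [← b.sum_inner_mul_inner u v, real_inner_comm u]
  have hform : ∑ μ, ∑ ν, J μ ν * ⟪t μ, t ν⟫ = ∑ i, x i ⬝ᵥ J *ᵥ x i := by
    simp_rw [← sum_sum_mul_mul_eq_dotProduct_mulVec, hinner (t _), Finset.mul_sum]
    conv_rhs => rw [Finset.sum_comm]; enter [2, μ]; rw [Finset.sum_comm]
    refine Finset.sum_congr rfl fun μ _ => Finset.sum_congr rfl fun ν _ =>
      Finset.sum_congr rfl fun i _ => ?_
    ring
  have hself : ∑ μ, ‖t μ‖ ^ 2 = ∑ i, x i ⬝ᵥ x i := by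
    simp_rw [← b.sum_sq_inner_right, dotProduct, ← sq]
    exact Finset.sum_comm
  have hnorm_sum : ‖∑ μ, t μ‖ ^ 2 = ∑ i, (∑ μ, x i μ) ^ 2 := by
    simp_rw [← b.sum_sq_inner_right, inner_sum]
    rfl
  rw [hform, hself, hnorm_sum, Finset.mul_sum, Finset.mul_sum, ← Finset.sum_add_distrib]
  exact Finset.sum_le_sum fun i _ => h (x i)

lemma inner_smul_add_smul_of_inner_eq_zero {s s' n : E} (hn : ‖n‖ = 1) (hs : ⟪n, s⟫ = 0)
    (hs' : ⟪n, s'⟫ = 0) (a b : ℝ) :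
    ⟪a • s + b • n, a • s' + b • n⟫ = a ^ 2 * ⟪s, s'⟫ + b ^ 2 := by
  have hsn : ⟪s, n⟫ = 0 := by rw [real_inner_comm, hs]
  have hnn : ⟪n, n⟫ = 1 := by rw [real_inner_self_eq_norm_sq, hn, one_pow]
  simp only [inner_add_left, inner_add_right, real_inner_smul_left, real_inner_smul_right,
    hsn, hs', hnn]
  ring

lemma norm_smul_add_smul_eq_one_s4 {s n : E} (hs : ‖s‖ = 1) (hn : ‖n‖ = 1) (h : ⟪n, s⟫ = 0)
    {a b : ℝ} (hab : a ^ 2 + b ^ 2 = 1) : ‖a • s + b • n‖ = 1 := by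
  rw [← pow_eq_one_iff_of_nonneg (norm_nonneg _) two_ne_zero, ← real_inner_self_eq_norm_sq,
    inner_smul_add_smul_of_inner_eq_zero hn h h, real_inner_self_eq_norm_sq, hs, one_pow, mul_one,
    hab]

lemma sum_mul_inner_eq_of_sum_smul_eq_smul {J : Matrix ι ι ℝ} {l : ℝ} {s : ι → E} {μ : ι}
    (heig : ∑ ν, J μ ν • s ν = l • s μ) (hs : ‖s μ‖ = 1) :
    ∑ ν, J μ ν * ⟪s μ, s ν⟫ = l := by
  simp_rw [← real_inner_smul_right, ← inner_sum, heig, real_inner_smul_right,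
    real_inner_self_eq_norm_sq, hs, one_pow, mul_one]

lemma sum_sum_mul_inner_smul_add_smul {J : Matrix ι ι ℝ} {j l : ℝ}
    (hrow : ∀ μ, ∑ ν, J μ ν = j) {s : ι → E} {n : E} (hs : ∀ μ, ‖s μ‖ = 1)
    (heig : ∀ μ, ∑ ν, J μ ν • s ν = l • s μ) (hn : ‖n‖ = 1) (horth : ∀ μ, ⟪n, s μ⟫ = 0) (a b : ℝ) :
    ∑ μ, ∑ ν, J μ ν * ⟪a • s μ + b • n, a • s ν + b • n⟫ =
      Fintype.card ι * (a ^ 2 * l + b ^ 2 * j) := by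
  simp_rw [inner_smul_add_smul_of_inner_eq_zero hn (horth _) (horth _), mul_add,
    Finset.sum_add_distrib, mul_left_comm _ (a ^ 2), ← Finset.mul_sum, ← Finset.sum_mul,
    sum_mul_inner_eq_of_sum_smul_eq_smul (heig _) (hs _), hrow]
  simp only [Finset.sum_const, Finset.card_univ, nsmul_eq_mul]
  ring

end InnerProductSpace

theorem tilted_states_are_relative_anti_ground_states_general {N : ℕ}
    (J : Matrix (Fin N) (Fin N) ℝ) (hJ : J.IsSymm)
    (j : ℝ) (hrow : ∀ μ, ∑ ν, J μ ν = j)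
    (jmaxi : ℝ)
    -- `jmaxi` is the largest eigenvalue of the quadratic form `x ↦ ⟨x, Jx⟩`
    -- restricted to the hyperplane `{x | ∑ μ, x μ = 0}` (Rayleigh characterization):
    (hmaxi_le : ∀ x : Fin N → ℝ, (∑ μ, x μ) = 0 →
      ∑ μ, ∑ ν, x μ * J μ ν * x ν ≤ jmaxi * ∑ μ, x μ ^ 2)
    (s : Fin N → EuclideanSpace ℝ (Fin 3)) (hstate : ∀ μ, ‖s μ‖ = 1)
    (heig : ∀ μ, ∑ ν, J μ ν • s ν = jmaxi • s μ)
    (n : EuclideanSpace ℝ (Fin 3)) (hn : ‖n‖ = 1)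
    (horth : ∀ μ, ⟪n, s μ⟫ = 0)
    (S : ℝ) (hS0 : 0 ≤ S) (hSN : S ≤ N) :
    (∀ μ, ‖Real.sqrt (1 - S ^ 2 / (N : ℝ) ^ 2) • s μ + (S / N) • n‖ = 1) ∧
      heisenbergEnergy J
          (fun μ => Real.sqrt (1 - S ^ 2 / (N : ℝ) ^ 2) • s μ + (S / N) • n) =
        (j - jmaxi) / N * S ^ 2 + jmaxi * N ∧
      ∀ t : Fin N → EuclideanSpace ℝ (Fin 3), (∀ μ, ‖t μ‖ = 1) →
        ‖∑ μ, t μ‖ = S →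
        heisenbergEnergy J t ≤ (j - jmaxi) / N * S ^ 2 + jmaxi * N := by
  rcases Nat.eq_zero_or_pos N with rfl | hN
  · simp [heisenbergEnergy]
  have hS_le : S ^ 2 / (N : ℝ) ^ 2 ≤ 1 := by
    rw [div_le_one (by positivity)]
    exact pow_le_pow_left₀ hS0 hSN 2
  have hab : √(1 - S ^ 2 / (N : ℝ) ^ 2) ^ 2 + (S / N) ^ 2 = 1 := by
    rw [Real.sq_sqrt (by linarith), div_pow]
    ring
  refine ⟨fun μ => norm_smul_add_smul_eq_one_s4 (hstate μ) hn (horth μ) hab, ?_,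
    fun t ht htS => ?_⟩
  · rw [heisenbergEnergy, sum_sum_mul_inner_smul_add_smul hrow hstate heig hn horth,
      Fintype.card_fin, eq_sub_of_add_eq hab]
    field_simp
    ring
  · have hmax (y : Fin N → ℝ) (hy : ∑ μ, y μ = 0) : y ⬝ᵥ J *ᵥ y ≤ jmaxi * (y ⬝ᵥ y) := by
      rw [← sum_sum_mul_mul_eq_dotProduct_mulVec]
      simpa [dotProduct, sq] using hmaxi_le y hy
    have hbound := sum_sum_mul_inner_le_of_dotProduct_mulVec_le
      (dotProduct_mulVec_le_of_le_on_sum_eq_zero hJ hrow hmax) t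
    rw [heisenbergEnergy]
    simpa [ht, htS, add_comm] using hbound

theorem tilted_states_are_relative_anti_ground_states {N : ℕ}
    (J : Matrix (Fin N) (Fin N) ℝ) (hJ : J.IsSymm)
    (j : ℝ) (hrow : ∀ μ, ∑ ν, J μ ν = j)
    (jmaxi : ℝ)
    -- `jmaxi` is the largest eigenvalue of the quadratic form `x ↦ ⟨x, Jx⟩`
    -- restricted to the hyperplane `{x | ∑ μ, x μ = 0}` (Rayleigh characterization):
    (hmaxi_le : ∀ x : Fin N → ℝ, (∑ μ, x μ) = 0 →
      ∑ μ, ∑ ν, x μ * J μ ν * x ν ≤ jmaxi * ∑ μ, x μ ^ 2)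
    (hmaxi_attained : ∃ x : Fin N → ℝ, x ≠ 0 ∧ (∑ μ, x μ) = 0 ∧
      ∑ μ, ∑ ν, x μ * J μ ν * x ν = jmaxi * ∑ μ, x μ ^ 2)
    (s : Fin N → EuclideanSpace ℝ (Fin 3)) (hstate : ∀ μ, ‖s μ‖ = 1)
    (hsum : ∑ μ, s μ = 0)
    (heig : ∀ μ, ∑ ν, J μ ν • s ν = jmaxi • s μ)
    (n : EuclideanSpace ℝ (Fin 3)) (hn : ‖n‖ = 1)
    (horth : ∀ μ, ⟪n, s μ⟫ = 0)
    (S : ℝ) (hS0 : 0 ≤ S) (hSN : S ≤ N) :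
    (∀ μ, ‖Real.sqrt (1 - S ^ 2 / (N : ℝ) ^ 2) • s μ + (S / N) • n‖ = 1) ∧
      heisenbergEnergy J
          (fun μ => Real.sqrt (1 - S ^ 2 / (N : ℝ) ^ 2) • s μ + (S / N) • n) =
        (j - jmaxi) / N * S ^ 2 + jmaxi * N ∧
      ∀ t : Fin N → EuclideanSpace ℝ (Fin 3), (∀ μ, ‖t μ‖ = 1) →
        ‖∑ μ, t μ‖ = S →
        heisenbergEnergy J t ≤ (j - jmaxi) / N * S ^ 2 + jmaxi * N :=
  tilted_states_are_relative_anti_ground_states_general J hJ j hrow jmaxi hmaxi_le s hstate heig n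
    hn horth S hS0 hSN
end

section
/- Let J be a real symmetric N×N matrix with constant row sums j := ∑_ν J_{μν} (independent of μ), and let j_min be the smallest eigenvalue of J. Then every state s satisfies the lower bounding parabola H₀(s) ≥ ((j − j_min)/N)·‖∑_μ s_μ‖² + j_min·N. -/
open scoped RealInnerProductSpace

/-!
Shift the couplings by the smallest eigenvalue: `K = J - j_min • 1` is positive semidefinite, has
constant row sums `r = j - j_min`, and on unit spins its energy is that of `J` minus `j_min N`.
The energy `∑ K_{μν} ⟪x_μ, x_ν⟫` of any configuration under a positive semidefinite `K` is
nonnegative; for the configuration centred at its mean `(∑ x_μ) / N`, expanding with the constant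
row sums turns this into `(r / N) ‖∑ x_μ‖² ≤ ∑ K_{μν} ⟪x_μ, x_ν⟫`.
-/

open Finset

section QuadEnergy

variable {ι E : Type*} [Fintype ι] [NormedAddCommGroup E] [InnerProductSpace ℝ E]

noncomputable def quadEnergy (K : Matrix ι ι ℝ) (x : ι → E) : ℝ :=
  ∑ i, ∑ j, K i j * ⟪x i, x j⟫

-- `quadEnergy K x` is the sum of all entries of `K ⊙ gram ℝ x`.
theorem quadEnergy_nonneg {K : Matrix ι ι ℝ} (hK : K.PosSemidef) (x : ι → E) :
    0 ≤ quadEnergy K x := by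
  have := (hK.hadamard (Matrix.posSemidef_gram ℝ x)).dotProduct_mulVec_nonneg 1
  simpa [quadEnergy, dotProduct, Matrix.mulVec] using this

theorem quadEnergy_sub (K L : Matrix ι ι ℝ) (x : ι → E) :
    quadEnergy (K - L) x = quadEnergy K x - quadEnergy L x := by
  simp only [quadEnergy, Matrix.sub_apply, sub_mul, sum_sub_distrib]

theorem quadEnergy_smul_one [DecidableEq ι] (c : ℝ) (x : ι → E) :
    quadEnergy (c • (1 : Matrix ι ι ℝ)) x = c * ∑ i, ‖x i‖ ^ 2 := by
  simp [quadEnergy, Matrix.one_apply, mul_sum]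

theorem quadEnergy_sub_const {K : Matrix ι ι ℝ} (hK : K.IsSymm) {r : ℝ}
    (hrow : ∀ i, ∑ j, K i j = r) (x : ι → E) (c : E) :
    quadEnergy K (fun i ↦ x i - c) =
      quadEnergy K x - 2 * r * ⟪∑ i, x i, c⟫ + r * Fintype.card ι * ‖c‖ ^ 2 := by
  have hcol : ∀ j, ∑ i, K i j = r := fun j ↦ by
    simpa [← hK.apply j] using hrow j
  have hleft : ∑ i, ∑ j, K i j * ⟪x i, c⟫ = r * ⟪∑ i, x i, c⟫ := by
    simp_rw [← sum_mul, hrow, sum_inner, mul_sum]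
  have hright : ∑ i, ∑ j, K i j * ⟪c, x j⟫ = r * ⟪∑ i, x i, c⟫ := by
    rw [sum_comm]
    simp_rw [← sum_mul, hcol, sum_inner, mul_sum, real_inner_comm]
  have hconst : ∑ i, ∑ j, K i j * ‖c‖ ^ 2 = r * Fintype.card ι * ‖c‖ ^ 2 := by
    simp_rw [← sum_mul, hrow, sum_const, card_univ, nsmul_eq_mul]
    ring
  have hexpand : ∀ i j, K i j * ⟪x i - c, x j - c⟫ =
      K i j * ⟪x i, x j⟫ - K i j * ⟪x i, c⟫ - K i j * ⟪c, x j⟫ + K i j * ‖c‖ ^ 2 := by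
    intro i j
    rw [inner_sub_left, inner_sub_right, inner_sub_right, real_inner_self_eq_norm_sq]
    ring
  simp only [quadEnergy, hexpand, sum_add_distrib, sum_sub_distrib, hleft, hright, hconst]
  ring

theorem div_card_mul_norm_sum_sq_le_quadEnergy {K : Matrix ι ι ℝ} (hK : K.PosSemidef) {r : ℝ}
    (hrow : ∀ i, ∑ j, K i j = r) (x : ι → E) :
    r / Fintype.card ι * ‖∑ i, x i‖ ^ 2 ≤ quadEnergy K x := by
  set n : ℝ := (Fintype.card ι : ℝ)
  set S := ∑ i, x i
  have hsymm : K.IsSymm := hK.isHermitian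
  have hcentred := quadEnergy_nonneg hK fun i ↦ x i - n⁻¹ • S
  rw [quadEnergy_sub_const hsymm hrow, real_inner_smul_right, norm_smul,
    real_inner_self_eq_norm_sq, norm_inv, Real.norm_natCast] at hcentred
  -- holds also for `n = 0`, so an empty index type needs no separate case
  have hn : n * n⁻¹ ^ 2 = n⁻¹ := by
    simpa [sq, mul_assoc, mul_left_comm] using mul_inv_mul_cancel n⁻¹
  linear_combination hcentred + r * ‖S‖ ^ 2 * hn

end QuadEnergy

open scoped MatrixOrder in
theorem Matrix.IsHermitian.posSemidef_sub_smul_one {n : Type*} [Fintype n] [DecidableEq n]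
    {J : Matrix n n ℝ} (hJ : J.IsHermitian) {c : ℝ}
    (hc : ∀ x, Module.End.HasEigenvalue (Matrix.toLin' J) x → c ≤ x) :
    (J - c • 1).PosSemidef := by
  rw [← Algebra.algebraMap_eq_smul_one, ← Matrix.le_iff]
  refine (algebraMap_le_iff_le_spectrum hJ.isSelfAdjoint).mpr fun x hx ↦ hc x ?_
  rwa [Module.End.hasEigenvalue_iff_mem_spectrum, Matrix.spectrum_toLin']

theorem lower_bounding_parabola_general {N : ℕ}
    (J : Matrix (Fin N) (Fin N) ℝ) (hJ : J.IsSymm)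
    (j : ℝ) (hrow : ∀ μ, ∑ ν, J μ ν = j)
    (jmin : ℝ)
    (hjmin_le : ∀ x : ℝ, Module.End.HasEigenvalue (Matrix.toLin' J) x → jmin ≤ x)
    (s : Fin N → EuclideanSpace ℝ (Fin 3)) (hstate : ∀ μ, ‖s μ‖ = 1) :
    (j - jmin) / N * ‖∑ μ, s μ‖ ^ 2 + jmin * N ≤ heisenbergEnergy J s := by
  set K := J - jmin • (1 : Matrix (Fin N) (Fin N) ℝ)
  have hK : K.PosSemidef := Matrix.IsHermitian.posSemidef_sub_smul_one hJ hjmin_le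
  have hKrow : ∀ μ, ∑ ν, K μ ν = j - jmin := fun μ ↦ by
    simp [K, Matrix.one_apply, sum_sub_distrib, hrow]
  have hEnergy : heisenbergEnergy J s = quadEnergy K s + jmin * N := by
    rw [quadEnergy_sub, quadEnergy_smul_one]
    simp [heisenbergEnergy, quadEnergy, hstate]
  have hbound := div_card_mul_norm_sum_sq_le_quadEnergy hK hKrow s
  rw [Fintype.card_fin] at hbound
  linarith

theorem lower_bounding_parabola {N : ℕ}
    (J : Matrix (Fin N) (Fin N) ℝ) (hJ : J.IsSymm)
    (j : ℝ) (hrow : ∀ μ, ∑ ν, J μ ν = j)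
    (jmin : ℝ)
    (hjmin : Module.End.HasEigenvalue (Matrix.toLin' J) jmin)
    (hjmin_le : ∀ x : ℝ, Module.End.HasEigenvalue (Matrix.toLin' J) x → jmin ≤ x)
    (s : Fin N → EuclideanSpace ℝ (Fin 3)) (hstate : ∀ μ, ‖s μ‖ = 1) :
    (j - jmin) / N * ‖∑ μ, s μ‖ ^ 2 + jmin * N ≤ heisenbergEnergy J s :=
  lower_bounding_parabola_general J hJ j hrow jmin hjmin_le s hstate
end

section
/- Let J be a real symmetric N×N matrix with constant row sums j := ∑_ν J_{μν} (independent of μ), and let j_maxi be the largest eigenvalue of the quadratic form x ↦ ⟨x, Jx⟩ restricted to the hyperplane {x ∈ ℝ^N : ∑_μ x_μ = 0}. Then every state s satisfies the upper bounding parabola H₀(s) ≤ ((j − j_maxi)/N)·‖∑_μ s_μ‖² + j_maxi·N. -/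
/-!
Write each spin in coordinates: the energy is the sum over the three components `t` of the
quadratic form `⟨t, J t⟩`. Splitting `t = x + c • 1` with `c` the mean of `t`, the hyperplane
component `x` contributes at most `jmaxi ‖x‖²`, while the constant row sums and the symmetry of
`J` kill the cross terms and make the mean contribute `j N c²`. Summing over the components,
`∑ ‖t‖² = N` because the spins are unit vectors, and `∑ (N c)² = ‖∑ μ, s μ‖²`.
-/

open scoped RealInnerProductSpace

open Finset Matrix

section

variable {ι : Type*} [Fintype ι] {J : Matrix ι ι ℝ} {j : ℝ}

lemma sum_sum_mul_mul_eq_dotProduct_mulVec (J : Matrix ι ι ℝ) (x : ι → ℝ) :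
    ∑ μ, ∑ ν, x μ * J μ ν * x ν = x ⬝ᵥ J *ᵥ x := by
  simp only [dotProduct, mulVec, mul_sum, mul_assoc]

lemma mulVec_one_of_row_sum (hrow : ∀ μ, ∑ ν, J μ ν = j) : J *ᵥ 1 = j • 1 := by
  ext μ
  simp [mulVec, dotProduct, hrow]

lemma dotProduct_mulVec_add_smul_one (hJ : J.IsSymm) (hrow : ∀ μ, ∑ ν, J μ ν = j)
    (x : ι → ℝ) (c : ℝ) :
    (x + c • 1) ⬝ᵥ J *ᵥ (x + c • 1) =
      x ⬝ᵥ J *ᵥ x + 2 * c * j * ∑ μ, x μ + c ^ 2 * j * Fintype.card ι := by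
  have hsymm : 1 ⬝ᵥ J *ᵥ x = x ⬝ᵥ J *ᵥ 1 := by
    rw [dotProduct_mulVec, dotProduct_comm, ← mulVec_transpose, hJ.eq]
  simp only [mulVec_add, mulVec_smul, mulVec_one_of_row_sum hrow, add_dotProduct,
    dotProduct_add, smul_dotProduct, dotProduct_smul, hsymm]
  rw [one_dotProduct_one]
  simp only [dotProduct_one, smul_eq_mul]
  ring

lemma dotProduct_mulVec_self_le_parabola (hJ : J.IsSymm) (hrow : ∀ μ, ∑ ν, J μ ν = j) {l : ℝ}
    (hl : ∀ x : ι → ℝ, ∑ μ, x μ = 0 → x ⬝ᵥ J *ᵥ x ≤ l * ∑ μ, x μ ^ 2) (t : ι → ℝ) :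
    t ⬝ᵥ J *ᵥ t ≤ l * ∑ μ, t μ ^ 2 + (j - l) / Fintype.card ι * (∑ μ, t μ) ^ 2 := by
  rcases isEmpty_or_nonempty ι with _ | _
  · simp
  set N : ℝ := (Fintype.card ι : ℝ)
  set c := (∑ μ, t μ) / N
  have hc : ∑ μ, t μ = c * N := (div_mul_cancel₀ _ (by positivity)).symm
  set x := t - c • 1
  have ht : t = x + c • 1 := by simp [x]
  have hx : ∑ μ, x μ = 0 := by simp [x, sum_sub_distrib, hc, N, mul_comm]
  have hsq : ∑ μ, t μ ^ 2 = ∑ μ, x μ ^ 2 + c ^ 2 * N := by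
    simp [ht, add_sq, sum_add_distrib, ← mul_sum, hx, N, mul_comm]
  calc t ⬝ᵥ J *ᵥ t = x ⬝ᵥ J *ᵥ x + c ^ 2 * j * N := by
        rw [ht, dotProduct_mulVec_add_smul_one hJ hrow, hx]; ring
    _ ≤ l * ∑ μ, x μ ^ 2 + c ^ 2 * j * N := by gcongr; exact hl x hx
    _ = l * ∑ μ, t μ ^ 2 + (j - l) / N * (∑ μ, t μ) ^ 2 := by
        rw [hsq, hc]; field_simp; ring

variable {κ : Type*} [Fintype κ]

lemma sum_sum_mul_inner_eq_sum_dotProduct_mulVec (J : Matrix ι ι ℝ)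
    (s : ι → EuclideanSpace ℝ κ) :
    ∑ μ, ∑ ν, J μ ν * ⟪s μ, s ν⟫ = ∑ i, (fun μ => s μ i) ⬝ᵥ J *ᵥ (fun μ => s μ i) := by
  simp only [PiLp.inner_apply, RCLike.inner_apply, conj_trivial, dotProduct, mulVec,
    mul_sum]
  simp_rw [Finset.sum_comm (γ := ι) (α := κ)]
  exact sum_congr rfl fun i _ => sum_congr rfl fun μ _ => sum_congr rfl fun ν _ => by ring

theorem sum_sum_mul_inner_le_parabola (hJ : J.IsSymm) (hrow : ∀ μ, ∑ ν, J μ ν = j) {l : ℝ}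
    (hl : ∀ x : ι → ℝ, ∑ μ, x μ = 0 → x ⬝ᵥ J *ᵥ x ≤ l * ∑ μ, x μ ^ 2)
    (s : ι → EuclideanSpace ℝ κ) :
    ∑ μ, ∑ ν, J μ ν * ⟪s μ, s ν⟫ ≤
      l * ∑ μ, ‖s μ‖ ^ 2 + (j - l) / Fintype.card ι * ‖∑ μ, s μ‖ ^ 2 := by
  rw [sum_sum_mul_inner_eq_sum_dotProduct_mulVec]
  calc _ ≤ ∑ i, (l * ∑ μ, s μ i ^ 2 + (j - l) / Fintype.card ι * (∑ μ, s μ i) ^ 2) :=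
        sum_le_sum fun i _ => dotProduct_mulVec_self_le_parabola hJ hrow hl _
    _ = _ := by
        simp only [EuclideanSpace.real_norm_sq_eq, sum_add_distrib, ← mul_sum,
          WithLp.ofLp_sum, Finset.sum_apply]
        rw [Finset.sum_comm]

end

theorem upper_bounding_parabola_general {N : ℕ}
    (J : Matrix (Fin N) (Fin N) ℝ) (hJ : J.IsSymm)
    (j : ℝ) (hrow : ∀ μ, ∑ ν, J μ ν = j)
    (jmaxi : ℝ)
    -- `jmaxi` is the largest eigenvalue of the quadratic form `x ↦ ⟨x, Jx⟩`
    -- restricted to the hyperplane `{x | ∑ μ, x μ = 0}` (Rayleigh characterization):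
    (hmaxi_le : ∀ x : Fin N → ℝ, (∑ μ, x μ) = 0 →
      ∑ μ, ∑ ν, x μ * J μ ν * x ν ≤ jmaxi * ∑ μ, x μ ^ 2)
    (s : Fin N → EuclideanSpace ℝ (Fin 3)) (hstate : ∀ μ, ‖s μ‖ = 1) :
    heisenbergEnergy J s ≤ (j - jmaxi) / N * ‖∑ μ, s μ‖ ^ 2 + jmaxi * N := by
  have hmaxi : ∀ x : Fin N → ℝ, ∑ μ, x μ = 0 → x ⬝ᵥ J *ᵥ x ≤ jmaxi * ∑ μ, x μ ^ 2 :=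
    fun x hx => sum_sum_mul_mul_eq_dotProduct_mulVec J x ▸ hmaxi_le x hx
  have hbound := sum_sum_mul_inner_le_parabola hJ hrow hmaxi s
  simp only [hstate, one_pow, sum_const, card_univ, Fintype.card_fin, nsmul_eq_mul,
    mul_one] at hbound
  rw [heisenbergEnergy]
  linarith

theorem upper_bounding_parabola {N : ℕ}
    (J : Matrix (Fin N) (Fin N) ℝ) (hJ : J.IsSymm)
    (j : ℝ) (hrow : ∀ μ, ∑ ν, J μ ν = j)
    (jmaxi : ℝ)
    -- `jmaxi` is the largest eigenvalue of the quadratic form `x ↦ ⟨x, Jx⟩`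
    -- restricted to the hyperplane `{x | ∑ μ, x μ = 0}` (Rayleigh characterization):
    (hmaxi_le : ∀ x : Fin N → ℝ, (∑ μ, x μ) = 0 →
      ∑ μ, ∑ ν, x μ * J μ ν * x ν ≤ jmaxi * ∑ μ, x μ ^ 2)
    (hmaxi_attained : ∃ x : Fin N → ℝ, x ≠ 0 ∧ (∑ μ, x μ) = 0 ∧
      ∑ μ, ∑ ν, x μ * J μ ν * x ν = jmaxi * ∑ μ, x μ ^ 2)
    (s : Fin N → EuclideanSpace ℝ (Fin 3)) (hstate : ∀ μ, ‖s μ‖ = 1) :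
    heisenbergEnergy J s ≤ (j - jmaxi) / N * ‖∑ μ, s μ‖ ^ 2 + jmaxi * N :=
  upper_bounding_parabola_general J hJ j hrow jmaxi hmaxi_le s hstate
end

section
/- Let G be a group of permutations of {1,…,N} acting transitively, and let J be a real symmetric N×N matrix invariant under G, i.e. J_{g(μ) g(ν)} = J_{μν} for all g ∈ G and all μ, ν. Let s be a symmetric state (for every g ∈ G there exists an orthogonal 3×3 matrix R with s_{g(μ)} = R s_μ for all μ) which is stationary (there exist reals κ_μ with ∑_ν J_{μν} s_ν = κ_μ s_μ for all μ). Then s is weakly symmetric: there is a single constant c ∈ ℝ with ∑_ν J_{μν} s_ν = c s_μ for all μ. -/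
/-!
The local field `h μ = ∑ ν, J μ ν • s ν` is equivariant: if `J` is invariant under the permutation
`g` and `s ∘ g = f ∘ s` for a linear map `f`, then `h (g μ) = f (h μ)`. Hence the stationarity
equation `h μ₀ = κ μ₀ • s μ₀` at one site is transported by `f` to `h (g μ₀) = κ μ₀ • s (g μ₀)`,
and by transitivity every site carries the same constant `κ μ₀`.
-/

open scoped RealInnerProductSpace
open Matrix

section LocalField

variable {R ι M : Type*} [Semiring R] [Fintype ι] [AddCommMonoid M] [Module R M]

def localField (J : Matrix ι ι R) (s : ι → M) (μ : ι) : M :=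
  ∑ ν, J μ ν • s ν

variable {J : Matrix ι ι R} {s : ι → M} {g : Equiv.Perm ι} {f : M →ₗ[R] M}

theorem localField_apply_perm (hJ : ∀ μ ν, J (g μ) (g ν) = J μ ν) (hs : ∀ μ, s (g μ) = f (s μ))
    (μ : ι) : localField J s (g μ) = f (localField J s μ) := by
  simp only [localField, map_sum, map_smul, ← hs, ← hJ μ]
  exact (Equiv.sum_comp g fun ν => J (g μ) ν • s ν).symm

theorem localField_apply_perm_eq_smul (hJ : ∀ μ ν, J (g μ) (g ν) = J μ ν)
    (hs : ∀ μ, s (g μ) = f (s μ)) {μ : ι} {c : R} (hμ : localField J s μ = c • s μ) :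
    localField J s (g μ) = c • s (g μ) := by
  rw [localField_apply_perm hJ hs, hμ, map_smul, hs]

end LocalField

theorem stationary_symmetric_is_weakly_symmetric_general {N : ℕ}
    (G : Subgroup (Equiv.Perm (Fin N)))
    (htrans : ∀ μ ν : Fin N, ∃ g ∈ G, g μ = ν)
    (J : Matrix (Fin N) (Fin N) ℝ)
    (hinv : ∀ g ∈ G, ∀ μ ν : Fin N, J (g μ) (g ν) = J μ ν)
    (s : Fin N → EuclideanSpace ℝ (Fin 3))
    -- s is symmetric:
    (hsym : ∀ g ∈ G, ∃ R : Matrix (Fin 3) (Fin 3) ℝ,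
      R * Rᵀ = 1 ∧ ∀ μ, s (g μ) = R.mulVec (s μ))
    -- s is stationary:
    (κ : Fin N → ℝ) (hstat : ∀ μ, ∑ ν, J μ ν • s ν = κ μ • s μ) :
    -- then s is weakly symmetric:
    ∃ c : ℝ, ∀ μ, ∑ ν, J μ ν • s ν = c • s μ := by
  rcases isEmpty_or_nonempty (Fin N) with _ | ⟨⟨μ₀⟩⟩
  · exact ⟨0, isEmptyElim⟩
  refine ⟨κ μ₀, fun μ => ?_⟩
  obtain ⟨g, hg, rfl⟩ := htrans μ₀ μ
  obtain ⟨R, -, hR⟩ := hsym g hg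
  exact localField_apply_perm_eq_smul (f := R.toEuclideanLin) (hinv g hg)
    (fun ν => WithLp.ofLp_injective _ (hR ν)) (hstat μ₀)

theorem stationary_symmetric_is_weakly_symmetric {N : ℕ}
    (G : Subgroup (Equiv.Perm (Fin N)))
    (htrans : ∀ μ ν : Fin N, ∃ g ∈ G, g μ = ν)
    (J : Matrix (Fin N) (Fin N) ℝ) (hJ : J.IsSymm)
    (hinv : ∀ g ∈ G, ∀ μ ν : Fin N, J (g μ) (g ν) = J μ ν)
    (s : Fin N → EuclideanSpace ℝ (Fin 3)) (hstate : ∀ μ, ‖s μ‖ = 1)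
    -- s is symmetric:
    (hsym : ∀ g ∈ G, ∃ R : Matrix (Fin 3) (Fin 3) ℝ,
      R * Rᵀ = 1 ∧ ∀ μ, s (g μ) = R.mulVec (s μ))
    -- s is stationary:
    (κ : Fin N → ℝ) (hstat : ∀ μ, ∑ ν, J μ ν • s ν = κ μ • s μ) :
    -- then s is weakly symmetric:
    ∃ c : ℝ, ∀ μ, ∑ ν, J μ ν • s ν = c • s μ :=
  stationary_symmetric_is_weakly_symmetric_general G htrans J hinv s hsym κ hstat
end

section
/- Let G be a group of permutations of {1,…,N}, let s and s' be two states, and let R : G → O(3) assign to each g ∈ G an orthogonal 3×3 matrix such that s_{g(μ)} = R_g s_μ and s'_{g(μ)} = R_g s'_μ for all g ∈ G and all μ. Assume s is isotropic: for every μ there exists g ∈ G with g(μ) = μ such that R_g is a rotation (det R_g = 1) with R_g² ≠ 1 (i.e. a rotation through an angle different from 0 and π). Then for every μ, s'_μ = s_μ or s'_μ = −s_μ. -/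
/-!
Fix `μ` and a stabilizer element `g` with `A := R g` a rotation and `A² ≠ 1`. Both `s μ` and
`s' μ` are fixed by `A`. If they were linearly independent, their cross product would be a
nonzero vector, also fixed by `A` because rotations preserve cross products; then `A` fixes a
basis of `ℝ³`, so `A = 1`, contradicting `A² ≠ 1`. Hence `s' μ` is a unit multiple of `s μ`.
-/

open scoped RealInnerProductSpace
open Matrix

lemma eq_or_eq_neg_of_not_linearIndependent_pair {E : Type*} [NormedAddCommGroup E]
    [NormedSpace ℝ E] {x y : E} (hx : ‖x‖ = 1) (hy : ‖y‖ = 1)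
    (h : ¬ LinearIndependent ℝ ![x, y]) : y = x ∨ y = -x := by
  have hx0 : x ≠ 0 := by rintro rfl; simp at hx
  obtain ⟨a, rfl⟩ : ∃ a : ℝ, a • x = y := by
    simpa [LinearIndependent.pair_iff' hx0] using h
  have ha : |a| = 1 := by simpa [norm_smul, hx] using hy
  rcases abs_eq (zero_le_one' ℝ) |>.mp ha with rfl | rfl <;> simp

namespace Matrix

variable {R : Type*}

lemma of_vec3_mul_transpose [CommRing R] (A : Matrix (Fin 3) (Fin 3) R) (a b c : Fin 3 → R) :
    of ![a, b, c] * Aᵀ = of ![A *ᵥ a, A *ᵥ b, A *ᵥ c] := by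
  funext i
  fin_cases i <;> exact vecMul_transpose A _

lemma mulVec_cross_of_mem_specialOrthogonalGroup [CommRing R] {A : Matrix (Fin 3) (Fin 3) R}
    (hA : A ∈ specialOrthogonalGroup (Fin 3) R) (v w : Fin 3 → R) :
    A *ᵥ (v ⨯₃ w) = (A *ᵥ v) ⨯₃ (A *ᵥ w) := by
  obtain ⟨hAAt, hdet⟩ := mem_specialOrthogonalGroup_iff.mp hA
  rw [mem_orthogonalGroup_iff] at hAAt
  ext i
  have hrow : A *ᵥ A i = Pi.single i 1 := by
    rw [← vecMul_transpose, ← mul_apply_eq_vecMul, hAAt]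
    ext j; simp [one_apply, Pi.single_apply, eq_comm]
  -- both sides are triple products, and `![eᵢ, A v, A w] = ![Aᵢ, v, w] * Aᵀ` with `det Aᵀ = 1`
  calc (A *ᵥ (v ⨯₃ w)) i = det (of ![A i, v, w] * Aᵀ) := by
        rw [det_mul, det_transpose, hdet, mul_one]; exact triple_product_eq_det _ _ _
    _ = ((A *ᵥ v) ⨯₃ (A *ᵥ w)) i := by
        rw [of_vec3_mul_transpose, hrow]
        exact (triple_product_eq_det _ _ _).symm.trans (by rw [single_dotProduct, one_mul])

lemma eq_one_of_mulVec_eq_self_of_cross_ne_zero [Field R] [LinearOrder R] [IsStrictOrderedRing R]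
    {A : Matrix (Fin 3) (Fin 3) R} (hA : A ∈ specialOrthogonalGroup (Fin 3) R) {v w : Fin 3 → R}
    (hv : A *ᵥ v = v) (hw : A *ᵥ w = w) (hvw : v ⨯₃ w ≠ 0) : A = 1 := by
  have hu : A *ᵥ (v ⨯₃ w) = v ⨯₃ w := by
    rw [mulVec_cross_of_mem_specialOrthogonalGroup hA, hv, hw]
  have hdet : IsUnit (of ![v, w, v ⨯₃ w]).det := by
    refine isUnit_iff_ne_zero.mpr ?_
    have h := mt dotProduct_self_eq_zero.mp hvw
    rwa [triple_product_permutation, triple_product_eq_det] at h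
  have hfix : of ![v, w, v ⨯₃ w] * Aᵀ = of ![v, w, v ⨯₃ w] := by
    rw [of_vec3_mul_transpose, hv, hw, hu]
  rw [← transpose_eq_one, ← ((isUnit_iff_isUnit_det _).mpr hdet).mul_eq_left]
  exact hfix

end Matrix

theorem isotropic_state_determined_up_to_sign {N : ℕ}
    (G : Subgroup (Equiv.Perm (Fin N)))
    (s s' : Fin N → EuclideanSpace ℝ (Fin 3))
    (hs : ∀ μ, ‖s μ‖ = 1) (hs' : ∀ μ, ‖s' μ‖ = 1)
    (R : G → Matrix (Fin 3) (Fin 3) ℝ)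
    (hR : ∀ g : G, R g * (R g)ᵀ = 1)
    (hcov : ∀ g : G, ∀ μ, s ((g : Equiv.Perm (Fin N)) μ) = (R g).mulVec (s μ))
    (hcov' : ∀ g : G, ∀ μ, s' ((g : Equiv.Perm (Fin N)) μ) = (R g).mulVec (s' μ))
    -- s is isotropic:
    (hiso : ∀ μ : Fin N, ∃ g : G, (g : Equiv.Perm (Fin N)) μ = μ ∧
      (R g).det = 1 ∧ R g * R g ≠ 1) :
    ∀ μ, s' μ = s μ ∨ s' μ = -s μ := by
  intro μ
  obtain ⟨g, hfix, hdet, hsq⟩ := hiso μ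
  have hA : R g ∈ specialOrthogonalGroup (Fin 3) ℝ :=
    mem_specialOrthogonalGroup_iff.mpr ⟨(mem_orthogonalGroup_iff _ _).mpr (hR g), hdet⟩
  have hv : R g *ᵥ (s μ).ofLp = (s μ).ofLp := by rw [← hcov g μ, hfix]
  have hw : R g *ᵥ (s' μ).ofLp = (s' μ).ofLp := by rw [← hcov' g μ, hfix]
  by_contra hne
  have hind : LinearIndependent ℝ ![s μ, s' μ] := by
    by_contra hdep
    exact hne (eq_or_eq_neg_of_not_linearIndependent_pair (hs μ) (hs' μ) hdep)
  have hcross : (s μ).ofLp ⨯₃ (s' μ).ofLp ≠ 0 := by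
    rw [crossProduct_ne_zero_iff_linearIndependent, LinearIndependent.pair_iff]
    rw [LinearIndependent.pair_iff] at hind
    exact fun a b hab ↦ hind a b (WithLp.ofLp_injective 2 (by simpa using hab))
  exact hsq (by rw [eq_one_of_mulVec_eq_self_of_cross_ne_zero hA hv hw hcross, one_mul])
end

section
/- Let G be a group of permutations of {1,…,N} acting transitively, acting on ℝ^N by permutation of coordinates, and let V ⊆ ℝ^N be a 3-dimensional linear subspace invariant under this action. Then there exists a symmetric state s : {1,…,N} → ℝ³, i.e. ‖s_μ‖ = 1 for all μ and for every g ∈ G there is an orthogonal 3×3 matrix R with s_{g(μ)} = R s_μ for all μ, such that the three coordinate rows of s, namely the vectors (s_1^i, s_2^i, …, s_N^i) ∈ ℝ^N for i = 1, 2, 3, form a basis of V. -/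
open Matrix

/-! Put an orthonormal basis of `V` into the columns of an `N × 3` matrix `M`. For `g ∈ G`,
permuting the rows of `M` by `g` gives another matrix with orthonormal columns spanning `V`, so it
is `M Rᵀ` for an orthogonal `R`: the rows of `M` transform by `R`. Their lengths are therefore
`G`-invariant, hence constant by transitivity, and as `Mᵀ M = 1` their squares add up to `3`.
So every row has squared length `3 / N`, and the rows of `√(N / 3) • M` form the state. -/

namespace Matrix

variable {ι ι' k R : Type*}

theorem linearIndependent_col_of_mul_eq_one [Fintype ι] [Fintype k] [DecidableEq k]
    [CommSemiring R] {M : Matrix ι k R} {A : Matrix k ι R} (h : A * M = 1) :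
    LinearIndependent R M.col := by
  rw [← mulVec_injective_iff]
  intro v w hvw
  simpa [mulVec_mulVec, h] using congrArg (A *ᵥ ·) hvw

theorem range_mulVecLin_smul [Fintype k] [Semifield R] (M : Matrix ι k R) {c : R} (hc : c ≠ 0) :
    LinearMap.range (c • M).mulVecLin = LinearMap.range M.mulVecLin := by
  rw [show (c • M).mulVecLin = c • M.mulVecLin from LinearMap.ext fun v => smul_mulVec c M v]
  exact LinearMap.range_smul _ _ hc

theorem mul_transpose_mulVec_of_mem_range [Fintype ι] [Fintype k] [DecidableEq k]
    [CommSemiring R] {M : Matrix ι k R} (hM : Mᵀ * M = 1) {x : ι → R}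
    (hx : x ∈ LinearMap.range M.mulVecLin) : (M * Mᵀ) *ᵥ x = x := by
  obtain ⟨v, rfl⟩ := hx
  simp only [mulVecLin_apply, mulVec_mulVec, Matrix.mul_assoc, hM, Matrix.mul_one]

theorem exists_mem_orthogonalGroup_eq_mul_transpose [Fintype ι] [Fintype k] [DecidableEq k]
    [CommRing R] {M M' : Matrix ι k R} (hM : Mᵀ * M = 1) (hM' : M'ᵀ * M' = 1)
    (h : LinearMap.range M'.mulVecLin ≤ LinearMap.range M.mulVecLin) :
    ∃ Q ∈ orthogonalGroup k R, M' = M * Qᵀ := by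
  have hproj : M * (Mᵀ * M') = M' := by
    refine ext_iff_mulVec.mpr fun v => ?_
    rw [← Matrix.mul_assoc, ← mulVec_mulVec]
    exact mul_transpose_mulVec_of_mem_range hM (h ⟨v, rfl⟩)
  refine ⟨M'ᵀ * M, (mem_orthogonalGroup_iff k R).mpr ?_, ?_⟩
  · rw [transpose_mul, transpose_transpose, Matrix.mul_assoc, hproj, hM']
  · rw [transpose_mul, transpose_transpose, hproj]

theorem transpose_mul_self_submatrix [Fintype ι] [Fintype ι'] [AddCommMonoid R] [Mul R]
    (M : Matrix ι k R) (σ : ι' ≃ ι) :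
    (M.submatrix σ id)ᵀ * M.submatrix σ id = Mᵀ * M := by
  rw [transpose_submatrix, ← submatrix_id_id (Mᵀ * M), ← submatrix_mul_equiv Mᵀ M _ σ]

theorem exists_mem_orthogonalGroup_row_perm [Fintype ι] [Fintype k] [DecidableEq k] [CommRing R]
    {M : Matrix ι k R} (hM : Mᵀ * M = 1) (σ : Equiv.Perm ι)
    (hσ : ∀ x ∈ LinearMap.range M.mulVecLin, x ∘ σ ∈ LinearMap.range M.mulVecLin) :
    ∃ Q ∈ orthogonalGroup k R, ∀ μ, M (σ μ) = Q *ᵥ M μ := by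
  have hrange : LinearMap.range (M.submatrix σ id).mulVecLin ≤ LinearMap.range M.mulVecLin := by
    rintro _ ⟨v, rfl⟩
    exact hσ _ ⟨v, rfl⟩
  obtain ⟨Q, hQ, hMQ⟩ := exists_mem_orthogonalGroup_eq_mul_transpose hM
    ((transpose_mul_self_submatrix M σ).trans hM) hrange
  refine ⟨Q, hQ, fun μ => ?_⟩
  rw [← vecMul_transpose]
  exact congrFun hMQ μ

theorem mulVec_dotProduct_mulVec_of_mem_orthogonalGroup [Fintype k] [DecidableEq k] [CommRing R]
    {Q : Matrix k k R} (hQ : Q ∈ orthogonalGroup k R) (v w : k → R) :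
    (Q *ᵥ v) ⬝ᵥ (Q *ᵥ w) = v ⬝ᵥ w := by
  rw [dotProduct_mulVec, vecMul_mulVec, (mem_orthogonalGroup_iff' k R).mp hQ, vecMul_one]

theorem sum_row_dotProduct_self [Fintype ι] [Fintype k] [DecidableEq k] [CommSemiring R]
    {M : Matrix ι k R} (hM : Mᵀ * M = 1) :
    ∑ μ, M μ ⬝ᵥ M μ = Fintype.card k := by
  rw [← trace_one (n := k) (R := R), ← hM, trace_mul_comm]
  rfl

theorem row_dotProduct_self_eq_card_div_card [Fintype ι] [Fintype k] [DecidableEq k] [Field R]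
    [CharZero R] {M : Matrix ι k R} (hM : Mᵀ * M = 1) (G : Subgroup (Equiv.Perm ι))
    (htrans : ∀ μ ν : ι, ∃ g ∈ G, g μ = ν)
    (hG : ∀ g ∈ G, ∃ Q ∈ orthogonalGroup k R, ∀ μ, M (g μ) = Q *ᵥ M μ) (μ : ι) :
    M μ ⬝ᵥ M μ = Fintype.card k / Fintype.card ι := by
  have hconst : ∀ ν, M ν ⬝ᵥ M ν = M μ ⬝ᵥ M μ := fun ν => by
    obtain ⟨g, hg, rfl⟩ := htrans μ ν
    obtain ⟨Q, hQ, hMQ⟩ := hG g hg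
    rw [hMQ, mulVec_dotProduct_mulVec_of_mem_orthogonalGroup hQ]
  have : Nonempty ι := ⟨μ⟩
  have hcard : (Fintype.card ι : R) ≠ 0 := Nat.cast_ne_zero.mpr Fintype.card_ne_zero
  rw [← sum_row_dotProduct_self hM, Finset.sum_congr rfl fun ν _ => hconst ν]
  simp [hcard]

end Matrix

theorem EuclideanSpace.norm_toLp_eq_sqrt_dotProduct {k : Type*} [Fintype k] (v : k → ℝ) :
    ‖WithLp.toLp 2 v‖ = √(v ⬝ᵥ v) := by
  rw [norm_eq_sqrt_real_inner]
  rfl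

theorem Submodule.exists_transpose_mul_self_eq_one_range_eq {ι k : Type*} [Fintype ι] [Fintype k]
    [DecidableEq k] (V : Submodule ℝ (ι → ℝ)) (hV : Module.finrank ℝ V = Fintype.card k) :
    ∃ M : Matrix ι k ℝ, Mᵀ * M = 1 ∧ LinearMap.range M.mulVecLin = V := by
  let e := WithLp.linearEquiv 2 ℝ (ι → ℝ)
  have hW : Module.finrank ℝ (V.comap e.toLinearMap) = Fintype.card k := by
    rw [← hV, Submodule.comap_equiv_eq_map_symm, LinearEquiv.finrank_map_eq]
  let b : OrthonormalBasis k ℝ (V.comap e.toLinearMap) :=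
    (stdOrthonormalBasis ℝ _).reindex (Fintype.equivFinOfCardEq hW.symm).symm
  refine ⟨Matrix.of fun μ i => (b i : EuclideanSpace ℝ ι) μ, ?_, ?_⟩
  · ext i j
    have := b.inner_eq_ite i j
    rw [Submodule.coe_inner, EuclideanSpace.inner_eq_star_dotProduct] at this
    simpa [Matrix.mul_apply, Matrix.one_apply, dotProduct, mul_comm] using this
  · have hcol : (Matrix.of fun μ i => (b i : EuclideanSpace ℝ ι) μ).col
        = e.toLinearMap ∘ (V.comap e.toLinearMap).subtype ∘ b.toBasis := rfl
    rw [Matrix.range_mulVecLin, hcol, Set.range_comp, Set.range_comp, Submodule.span_image,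
      Submodule.span_image, b.toBasis.span_eq, Submodule.map_top, Submodule.range_subtype,
      Submodule.map_comap_eq_of_surjective e.surjective]

theorem symmetric_state_from_invariant_subspace {N : ℕ}
    (G : Subgroup (Equiv.Perm (Fin N)))
    (htrans : ∀ μ ν : Fin N, ∃ g ∈ G, g μ = ν)
    (V : Submodule ℝ (Fin N → ℝ))
    (hdim : Module.finrank ℝ V = 3)
    -- V is invariant under the action of G by permutation of coordinates:
    (hinvar : ∀ g ∈ G, ∀ x ∈ V, (fun μ => x (g μ)) ∈ V) :
    ∃ s : Fin N → EuclideanSpace ℝ (Fin 3),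
      (∀ μ, ‖s μ‖ = 1) ∧
      (∀ g ∈ G, ∃ R : Matrix (Fin 3) (Fin 3) ℝ,
        R * Rᵀ = 1 ∧ ∀ μ, s (g μ) = R.mulVec (s μ)) ∧
      LinearIndependent ℝ (fun i : Fin 3 => (fun μ => s μ i : Fin N → ℝ)) ∧
      (∀ i : Fin 3, (fun μ => s μ i : Fin N → ℝ) ∈ V) ∧
      Submodule.span ℝ (Set.range fun i : Fin 3 => (fun μ => s μ i : Fin N → ℝ)) = V := by
  obtain ⟨M, hMM, hMV⟩ := V.exists_transpose_mul_self_eq_one_range_eq (k := Fin 3) (by simpa)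
  have hsymm : ∀ g ∈ G, ∃ R ∈ orthogonalGroup (Fin 3) ℝ, ∀ μ, M (g μ) = R *ᵥ M μ :=
    fun g hg => exists_mem_orthogonalGroup_row_perm hMM g (hMV ▸ hinvar g hg)
  have hrow := row_dotProduct_self_eq_card_div_card hMM G htrans hsymm
  have hN : (3 : ℝ) ≤ N := by
    exact_mod_cast hdim ▸ (Submodule.finrank_le V).trans_eq (Module.finrank_fin_fun ℝ)
  set c := √(N / 3)
  have hc : c ≠ 0 := (Real.sqrt_pos.mpr (by positivity)).ne'
  have hc2 : c * c = N / 3 := Real.mul_self_sqrt (by positivity)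
  have hspan : Submodule.span ℝ (Set.range (c • M).col) = V :=
    (range_mulVecLin (c • M)).symm.trans ((range_mulVecLin_smul M hc).trans hMV)
  refine ⟨fun μ => WithLp.toLp 2 (c • M μ), fun μ => ?_, fun g hg => ?_, ?_, ?_, ?_⟩
  · rw [EuclideanSpace.norm_toLp_eq_sqrt_dotProduct, smul_dotProduct, dotProduct_smul, smul_smul,
      hc2, hrow, Fintype.card_fin, Fintype.card_fin, smul_eq_mul, Nat.cast_ofNat, div_mul_div_comm,
      mul_comm (N : ℝ), div_self (by positivity), Real.sqrt_one]
  · obtain ⟨R, hR, hMR⟩ := hsymm g hg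
    refine ⟨R, (mem_orthogonalGroup_iff _ _).mp hR, fun μ => ?_⟩
    show c • M (g μ) = R *ᵥ (c • M μ)
    rw [hMR, mulVec_smul]
  · refine linearIndependent_col_of_mul_eq_one (M := c • M) (A := c⁻¹ • Mᵀ) ?_
    rw [Matrix.smul_mul, Matrix.mul_smul, smul_smul, inv_mul_cancel₀ hc, hMM, one_smul]
  · exact fun i => hspan ▸ Submodule.subset_span ⟨i, rfl⟩
  · exact hspan
end

section
/- Let N ≥ 3 be odd and J > 0, and consider the spin ring of N spins with nearest-neighbor coupling, whose energy is H₀(s) = 2J ∑_{μ=0}^{N−1} ⟨s_μ, s_{μ+1 mod N}⟩. Then the minimal energy over all states equals 2JN·cos((N−1)π/N): every state s satisfies H₀(s) ≥ 2JN·cos((N−1)π/N), and there is a (coplanar, star-polygon) state attaining this value. -/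
/-!
Expand each Cartesian component `x` of the spin configuration in the characters of `ZMod N`.
By Parseval, `∑ x_μ²` and the nearest-neighbour correlation `∑ x_μ x_{μ+1}` become
`N⁻¹ ∑_k |x̂_k|²` and `N⁻¹ ∑_k cos (2πk/N) |x̂_k|²` with `x̂ = 𝓕 x`, and for odd `N` the smallest of the
numbers `cos (2πk/N)` is `cos ((N-1)π/N)`. Summing over the components and using `‖s_μ‖ = 1`
gives the lower bound. It is attained by the planar state `s_μ = exp (2πi m μ / N)` with
`N = 2m + 1`: as a character, it makes every bond contribute `cos (2πm/N) = cos ((N-1)π/N)`.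
-/

open scoped RealInnerProductSpace ComplexConjugate
open Finset Real

lemma cos_sub_one_mul_pi_div_le_cos_two_pi_mul_div {n v : ℕ} (hn : Odd n) (hv : v < n) :
    cos ((n - 1) * π / n) ≤ cos (2 * π * v / n) := by
  have hn0 : (0 : ℝ) < n := by exact_mod_cast hn.pos
  have of_two_mul_lt : ∀ w : ℕ, 2 * w < n → cos ((n - 1) * π / n) ≤ cos (2 * π * w / n) := by
    intro w hw
    have hw' : (2 * w : ℝ) ≤ n - 1 := by
      rw [le_sub_iff_add_le]
      exact_mod_cast hw
    rw [show 2 * π * w / n = 2 * w * π / n by ring]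
    apply cos_le_cos_of_nonneg_of_le_pi (by positivity)
    · rw [div_le_iff₀ hn0]
      nlinarith [pi_pos]
    · gcongr
  have hv2 : 2 * v ≠ n := by
    rintro rfl
    exact Nat.not_even_iff_odd.2 hn (even_two_mul v)
  rcases hv2.lt_or_gt with h | h
  · exact of_two_mul_lt v h
  · have hcos : cos (2 * π * v / n) = cos (2 * π * (n - v : ℕ) / n) := by
      rw [Nat.cast_sub hv.le, ← cos_neg, ← cos_add_two_pi]
      congr 1
      field_simp
      ring
    rw [hcos]
    exact of_two_mul_lt _ (by omega)

namespace ZMod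

variable {n : ℕ} [NeZero n]

lemma dft_comp_add_right (Φ : ZMod n → ℂ) (d k : ZMod n) :
    𝓕 (fun j ↦ Φ (j + d)) k = stdAddChar (d * k) * 𝓕 Φ k := by
  simp only [dft_apply, smul_eq_mul, mul_sum]
  rw [← (Equiv.subRight d).sum_comp]
  refine sum_congr rfl fun j _ ↦ ?_
  rw [Equiv.subRight_apply, sub_add_cancel, ← mul_assoc, ← AddChar.map_add_eq_mul]
  ring_nf

lemma sum_conj_dft_mul_dft (Φ Ψ : ZMod n → ℂ) :
    ∑ k, conj (𝓕 Φ k) * 𝓕 Ψ k = n * ∑ j, conj (Φ j) * Ψ j := by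
  have dft_dft_apply : ∀ j, ∑ k, stdAddChar (j * k) * 𝓕 Φ k = n * Φ j := fun j ↦ by
    simpa [dft_apply, mul_comm] using congrFun (dft_dft Φ) (-j)
  calc ∑ k, conj (𝓕 Φ k) * 𝓕 Ψ k
      = ∑ j, conj (∑ k, stdAddChar (j * k) * 𝓕 Φ k) * Ψ j := by
        simp only [dft_apply Ψ, smul_eq_mul, mul_sum, map_sum, map_mul, sum_mul]
        rw [sum_comm]
        refine sum_congr rfl fun j _ ↦ sum_congr rfl fun k _ ↦ ?_
        rw [AddChar.map_neg_eq_conj]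
        ring
    _ = n * ∑ j, conj (Φ j) * Ψ j := by
        simp [dft_dft_apply, mul_sum, mul_assoc]

lemma sum_norm_sq_dft (Φ : ZMod n → ℂ) : ∑ k, ‖𝓕 Φ k‖ ^ 2 = n * ∑ j, ‖Φ j‖ ^ 2 := by
  simpa [Complex.conj_mul', ← Complex.ofReal_pow, Complex.re_sum] using
    congrArg Complex.re (sum_conj_dft_mul_dft Φ Φ)

lemma sum_re_stdAddChar_mul_norm_sq_dft (Φ : ZMod n → ℂ) :
    ∑ k, (stdAddChar k).re * ‖𝓕 Φ k‖ ^ 2 = n * (∑ j, conj (Φ j) * Φ (j + 1)).re := by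
  have := congrArg Complex.re (sum_conj_dft_mul_dft Φ (fun j ↦ Φ (j + 1)))
  simp only [dft_comp_add_right, one_mul, mul_left_comm _ (stdAddChar _),
    Complex.conj_mul'] at this
  simpa [← Complex.ofReal_pow, Complex.re_sum, Complex.re_ofReal_mul] using this

lemma re_stdAddChar_natCast (m : ℕ) : (stdAddChar (m : ZMod n)).re = cos (2 * π * m / n) := by
  rw [stdAddChar_apply, toCircle_natCast,
    show 2 * π * Complex.I * m / n = ((2 * π * m / n : ℝ) : ℂ) * Complex.I by push_cast; ring,
    Complex.exp_ofReal_mul_I_re]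

lemma cos_sub_one_mul_pi_div_le_re_stdAddChar (hn : Odd n) (k : ZMod n) :
    cos ((n - 1) * π / n) ≤ (stdAddChar k).re := by
  rw [← natCast_zmod_val k, re_stdAddChar_natCast]
  exact cos_sub_one_mul_pi_div_le_cos_two_pi_mul_div hn k.val_lt

lemma cos_sub_one_mul_pi_div_mul_sum_norm_sq_le (hn : Odd n) (Φ : ZMod n → ℂ) :
    cos ((n - 1) * π / n) * ∑ j, ‖Φ j‖ ^ 2 ≤ (∑ j, conj (Φ j) * Φ (j + 1)).re := by
  have hn0 : (0 : ℝ) < n := by exact_mod_cast hn.pos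
  refine le_of_mul_le_mul_left ?_ hn0
  calc n * (cos ((n - 1) * π / n) * ∑ j, ‖Φ j‖ ^ 2)
      = ∑ k, cos ((n - 1) * π / n) * ‖𝓕 Φ k‖ ^ 2 := by
        rw [← mul_sum, sum_norm_sq_dft]
        ring
    _ ≤ ∑ k, (stdAddChar k).re * ‖𝓕 Φ k‖ ^ 2 :=
        sum_le_sum fun k _ ↦ by gcongr; exact cos_sub_one_mul_pi_div_le_re_stdAddChar hn k
    _ = n * (∑ j, conj (Φ j) * Φ (j + 1)).re := sum_re_stdAddChar_mul_norm_sq_dft Φ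

lemma cos_sub_one_mul_pi_div_mul_sum_sq_le (hn : Odd n) (x : ZMod n → ℝ) :
    cos ((n - 1) * π / n) * ∑ j, x j ^ 2 ≤ ∑ j, x j * x (j + 1) := by
  simpa [← Complex.ofReal_mul, Complex.re_sum] using
    cos_sub_one_mul_pi_div_mul_sum_norm_sq_le hn (fun j ↦ (x j : ℂ))

lemma cos_sub_one_mul_pi_div_mul_sum_norm_sq_le_sum_inner {ι : Type*} [Fintype ι] (hn : Odd n)
    (s : ZMod n → EuclideanSpace ℝ ι) :
    cos ((n - 1) * π / n) * ∑ j, ‖s j‖ ^ 2 ≤ ∑ j, ⟪s j, s (j + 1)⟫ := by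
  simp only [EuclideanSpace.norm_sq_eq, Real.norm_eq_abs, sq_abs, PiLp.inner_apply,
    RCLike.inner_apply, conj_trivial]
  rw [sum_comm, mul_sum, sum_comm]
  exact sum_le_sum fun i _ ↦ by
    simpa [mul_comm] using cos_sub_one_mul_pi_div_mul_sum_sq_le hn (fun j ↦ s j i)

lemma inner_stdAddChar_add (a b : ZMod n) :
    ⟪stdAddChar a, stdAddChar (a + b)⟫ = (stdAddChar b).re := by
  rw [Complex.inner, AddChar.map_add_eq_mul, mul_right_comm, Complex.mul_conj',
    AddChar.norm_apply]
  simp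

end ZMod

lemma Fin.sum_apply_add_one_eq_sum_zmod {n : ℕ} [NeZero n] {M : Type*} [AddCommMonoid M]
    (f : Fin n → Fin n → M) :
    ∑ μ, f μ (μ + 1) =
      ∑ μ : ZMod n, f ((ZMod.finEquiv n).symm μ) ((ZMod.finEquiv n).symm (μ + 1)) := by
  rw [← (ZMod.finEquiv n).toEquiv.sum_comp]
  simp

lemma cos_sub_one_mul_pi_div_mul_card_le_sum_inner {n : ℕ} [NeZero n] {ι : Type*} [Fintype ι]
    (hn : Odd n) (s : Fin n → EuclideanSpace ℝ ι) (hs : ∀ μ, ‖s μ‖ = 1) :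
    n * cos ((n - 1) * π / n) ≤ ∑ μ, ⟪s μ, s (μ + 1)⟫ := by
  rw [Fin.sum_apply_add_one_eq_sum_zmod (fun μ ν ↦ ⟪s μ, s ν⟫)]
  simpa [hs, mul_comm] using
    ZMod.cos_sub_one_mul_pi_div_mul_sum_norm_sq_le_sum_inner hn (s ∘ (ZMod.finEquiv n).symm)

def planeEmbedding (z : ℂ) : EuclideanSpace ℝ (Fin 3) := !₂[z.re, z.im, 0]

lemma inner_planeEmbedding (z w : ℂ) : ⟪planeEmbedding z, planeEmbedding w⟫ = ⟪z, w⟫ := by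
  simp [planeEmbedding, PiLp.inner_apply, Fin.sum_univ_three, Complex.inner]

lemma norm_planeEmbedding (z : ℂ) : ‖planeEmbedding z‖ = ‖z‖ := by
  rw [norm_eq_sqrt_real_inner, inner_planeEmbedding, ← norm_eq_sqrt_real_inner]

lemma inner_planeEmbedding_eq_zero (z : ℂ) : ⟪!₂[0, 0, 1], planeEmbedding z⟫ = 0 := by
  simp [planeEmbedding, PiLp.inner_apply, Fin.sum_univ_three]

noncomputable def starPolygonState (n : ℕ) [NeZero n] (m : ℕ) : Fin n → EuclideanSpace ℝ (Fin 3) :=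
  fun μ ↦ planeEmbedding (ZMod.stdAddChar ((m : ZMod n) * ZMod.finEquiv n μ))

section starPolygonState

variable {n : ℕ} [NeZero n] (m : ℕ)

lemma norm_starPolygonState (μ : Fin n) : ‖starPolygonState n m μ‖ = 1 := by
  rw [starPolygonState, norm_planeEmbedding, AddChar.norm_apply]

lemma inner_starPolygonState_eq_zero (μ : Fin n) : ⟪!₂[0, 0, 1], starPolygonState n m μ⟫ = 0 :=
  inner_planeEmbedding_eq_zero _

lemma sum_inner_starPolygonState :
    ∑ μ, ⟪starPolygonState n m μ, starPolygonState n m (μ + 1)⟫ = n * cos (2 * π * m / n) := by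
  simp only [starPolygonState, inner_planeEmbedding, map_add, map_one, mul_add, mul_one,
    ZMod.inner_stdAddChar_add, ZMod.re_stdAddChar_natCast, sum_const, card_univ,
    Fintype.card_fin, nsmul_eq_mul]

end starPolygonState

theorem spin_ring_odd_ground_state_energy_general {N : ℕ} [NeZero N]
    (hNodd : Odd N) (J : ℝ) (hJ : 0 < J) :
    (∀ s : Fin N → EuclideanSpace ℝ (Fin 3), (∀ μ, ‖s μ‖ = 1) →
      2 * J * N * Real.cos ((N - 1) * Real.pi / N) ≤
        2 * J * ∑ μ : Fin N, ⟪s μ, s (μ + 1)⟫) ∧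
    ∃ s : Fin N → EuclideanSpace ℝ (Fin 3), (∀ μ, ‖s μ‖ = 1) ∧
      (∃ n : EuclideanSpace ℝ (Fin 3), n ≠ 0 ∧ ∀ μ, ⟪n, s μ⟫ = 0) ∧
      2 * J * ∑ μ : Fin N, ⟪s μ, s (μ + 1)⟫ =
        2 * J * N * Real.cos ((N - 1) * Real.pi / N) := by
  obtain ⟨m, hm⟩ := hNodd
  have hcos : cos ((N - 1) * π / N) = cos (2 * π * m / N) := by
    rw [hm]
    push_cast
    ring_nf
  have e₃_ne_zero : (!₂[0, 0, 1] : EuclideanSpace ℝ (Fin 3)) ≠ 0 := fun h ↦ by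
    simpa using congrFun (congrArg WithLp.ofLp h) 2
  refine ⟨fun s hs ↦ ?_, starPolygonState N m, norm_starPolygonState m,
    ⟨_, e₃_ne_zero, inner_starPolygonState_eq_zero m⟩, ?_⟩
  · rw [mul_assoc (2 * J)]
    exact mul_le_mul_of_nonneg_left
      (cos_sub_one_mul_pi_div_mul_card_le_sum_inner ⟨m, hm⟩ s hs) (by positivity)
  · rw [sum_inner_starPolygonState, hcos, mul_assoc (2 * J)]

theorem spin_ring_odd_ground_state_energy {N : ℕ} [NeZero N]
    (hN : 3 ≤ N) (hNodd : Odd N) (J : ℝ) (hJ : 0 < J) :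
    (∀ s : Fin N → EuclideanSpace ℝ (Fin 3), (∀ μ, ‖s μ‖ = 1) →
      2 * J * N * Real.cos ((N - 1) * Real.pi / N) ≤
        2 * J * ∑ μ : Fin N, ⟪s μ, s (μ + 1)⟫) ∧
    ∃ s : Fin N → EuclideanSpace ℝ (Fin 3), (∀ μ, ‖s μ‖ = 1) ∧
      (∃ n : EuclideanSpace ℝ (Fin 3), n ≠ 0 ∧ ∀ μ, ⟪n, s μ⟫ = 0) ∧
      2 * J * ∑ μ : Fin N, ⟪s μ, s (μ + 1)⟫ =
        2 * J * N * Real.cos ((N - 1) * Real.pi / N) :=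
  spin_ring_odd_ground_state_energy_general hNodd J hJ
end
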